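/- For all linear forms L₁, …, L₉ ∈ ℂ⁴ and the symmetric tensor F : (Fin 4)⁴ → ℂ defined by F(i,j,k,l) = Σ_{ν=1}^{9} (L_ν)_i (L_ν)_j (L_ν)_k (L_ν)_l, the contraction P(F) associated to the block list (0,1,2,3), (0,1,6,9), (0,4,5,6), (0,5,7,8), (1,3,4,5), (1,4,7,8), (2,3,6,7), (2,4,8,9), (2,5,7,9), (3,6,8,9) on vertex set {0,1,…,9} equals 0. Here P(F) = Σ_φ (Π_{b=1}^{10} ε(φ(b,1), φ(b,2), φ(b,3), φ(b,4))) · (Π_{v=0}^{9} F(φ(v₁), φ(v₂), φ(v₃), φ(v₄))), the sum running over all assignments φ of an index in {1,2,3,4} to each of the 40 slots, where (v₁,v₂,v₃,v₄) are the four slots containing vertex v. -/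
import Mathlib

set_option maxRecDepth 10000


/-- The Levi-Civita symbol on `n` indices. -/
noncomputable def eps {n : ℕ} (f : Fin n → Fin n) : ℂ :=
  if h : Function.Bijective f then ((Equiv.Perm.sign (Equiv.ofBijective f h) : ℤ) : ℂ) else 0

/-- The ten ordered blocks `(0,1,2,3), (0,1,6,9), (0,4,5,6), (0,5,7,8),
(1,3,4,5), (1,4,7,8), (2,3,6,7), (2,4,8,9), (2,5,7,9), (3,6,8,9)` on vertex set
`{0,…,9}`. -/
def B : Fin 10 → Fin 4 → Fin 10 :=
  ![![0, 1, 2, 3], ![0, 1, 6, 9], ![0, 4, 5, 6], ![0, 5, 7, 8], ![1, 3, 4, 5],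
    ![1, 4, 7, 8], ![2, 3, 6, 7], ![2, 4, 8, 9], ![2, 5, 7, 9], ![3, 6, 8, 9]]

/-- The four slots `(b, k)` (block index, position) containing each vertex
`v ∈ Fin 10`, i.e. `B (slots v i).1 (slots v i).2 = v`. -/
def slots : Fin 10 → Fin 4 → Fin 10 × Fin 4 :=
  ![![(0, 0), (1, 0), (2, 0), (3, 0)],
    ![(0, 1), (1, 1), (4, 0), (5, 0)],
    ![(0, 2), (6, 0), (7, 0), (8, 0)],
    ![(0, 3), (4, 1), (6, 1), (9, 0)],
    ![(2, 1), (4, 2), (5, 1), (7, 1)],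
    ![(2, 2), (3, 1), (4, 3), (8, 1)],
    ![(1, 2), (2, 3), (6, 2), (9, 1)],
    ![(3, 2), (5, 2), (6, 3), (8, 2)],
    ![(3, 3), (5, 3), (7, 2), (9, 2)],
    ![(1, 3), (7, 3), (8, 3), (9, 3)]]

lemma eps_perm (σ : Equiv.Perm (Fin 4)) : eps ⇑σ = ((Equiv.Perm.sign σ : ℤ) : ℂ) := by
  rw [eps, dif_pos σ.bijective]
  have h : Equiv.ofBijective ⇑σ σ.bijective = σ := Equiv.ext fun x => rfl
  rw [h]

/-- Sum of `eps f * ∏ k, M k (f k)` over all functions equals a determinant. -/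
lemma sum_eps_eq_det (M : Fin 4 → Fin 4 → ℂ) :
    ∑ f : Fin 4 → Fin 4, eps f * ∏ k, M k (f k)
      = (Matrix.of fun i j => M j i).det := by
  rw [Matrix.det_apply']
  refine (Fintype.sum_of_injective (fun σ : Equiv.Perm (Fin 4) => ⇑σ)
    (fun σ τ h => Equiv.coe_fn_injective h)
    _ (fun f => eps f * ∏ k, M k (f k)) ?_ ?_).symm
  · intro f hf
    have hnb : ¬ Function.Bijective f := by
      intro hb
      exact hf ⟨Equiv.ofBijective f hb, rfl⟩
    show eps f * ∏ k, M k (f k) = 0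
    rw [eps, dif_neg hnb, zero_mul]
  · intro σ
    show _ = eps ⇑σ * ∏ k, M k (σ k)
    rw [eps_perm]
    simp [Matrix.of_apply]


/-- The degree 10 invariant of quaternary quartics with symbolic expression
`(abcd)(abgj)(aefg)(afhi)(bdef)(behi)(cdgh)(ceij)(cfhj)(dgij)` vanishes on every
quartic which is a sum of nine fourth powers of linear forms. -/
theorem quaternary_quartic_invariant_vanishes_on_nine_powers (L : Fin 9 → Fin 4 → ℂ) :
    ∑ φ : Fin 10 × Fin 4 → Fin 4,
      (∏ b : Fin 10, eps fun k => φ (b, k)) *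
        ∏ v : Fin 10,
          (∑ ν : Fin 9,
            L ν (φ (slots v 0)) * L ν (φ (slots v 1)) *
              L ν (φ (slots v 2)) * L ν (φ (slots v 3))) = 0 := by
  classical
  have hBS : ∀ v i, B (slots v i).1 (slots v i).2 = v := by decide
  have hbij : Function.Bijective (fun p : Fin 10 × Fin 4 => slots p.1 p.2) := by decide
  have hK : ∀ v w : Fin 10, v ≠ w → ∃ b k k', k ≠ k' ∧ B b k = v ∧ B b k' = w := by decide
  calc
    ∑ φ : Fin 10 × Fin 4 → Fin 4,
      (∏ b : Fin 10, eps fun k => φ (b, k)) *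
        ∏ v : Fin 10,
          (∑ ν : Fin 9,
            L ν (φ (slots v 0)) * L ν (φ (slots v 1)) *
              L ν (φ (slots v 2)) * L ν (φ (slots v 3)))
        = ∑ φ : Fin 10 × Fin 4 → Fin 4, ∑ ψ : Fin 10 → Fin 9,
            (∏ b : Fin 10, eps fun k => φ (b, k)) *
              ∏ v : Fin 10, ∏ i : Fin 4, L (ψ v) (φ (slots v i)) := by
          refine Finset.sum_congr rfl fun φ _ => ?_
          rw [Fintype.prod_sum (f := fun v ν =>
            L ν (φ (slots v 0)) * L ν (φ (slots v 1)) * L ν (φ (slots v 2)) * L ν (φ (slots v 3))),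
            Finset.mul_sum]
          refine Finset.sum_congr rfl fun ψ _ => ?_
          congr 1
          refine Finset.prod_congr rfl fun v _ => ?_
          rw [Fin.prod_univ_four]
    _ = ∑ ψ : Fin 10 → Fin 9, ∑ φ : Fin 10 × Fin 4 → Fin 4,
            (∏ b : Fin 10, eps fun k => φ (b, k)) *
              ∏ v : Fin 10, ∏ i : Fin 4, L (ψ v) (φ (slots v i)) := Finset.sum_comm
    _ = ∑ ψ : Fin 10 → Fin 9,
          ∏ b : Fin 10, ∑ f : Fin 4 → Fin 4, eps f * ∏ k : Fin 4, L (ψ (B b k)) (f k) := by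
          refine Finset.sum_congr rfl fun ψ _ => ?_
          rw [Fintype.prod_sum (f := fun b f => eps f * ∏ k : Fin 4, L (ψ (B b k)) (f k))]
          refine Fintype.sum_equiv (Equiv.curry (Fin 10) (Fin 4) (Fin 4)) _
            (fun Φ => ∏ b : Fin 10, (eps (Φ b) * ∏ k : Fin 4, L (ψ (B b k)) (Φ b k)))
            fun φ => ?_
          show (∏ b : Fin 10, eps fun k => φ (b, k)) *
              ∏ v : Fin 10, ∏ i : Fin 4, L (ψ v) (φ (slots v i))
            = ∏ b : Fin 10, ((eps fun k => φ (b, k)) * ∏ k : Fin 4, L (ψ (B b k)) (φ (b, k)))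
          rw [Finset.prod_mul_distrib]
          congr 1
          calc ∏ v : Fin 10, ∏ i : Fin 4, L (ψ v) (φ (slots v i))
                = ∏ p : Fin 10 × Fin 4, L (ψ p.1) (φ (slots p.1 p.2)) :=
                  (Fintype.prod_prod_type (f := fun p : Fin 10 × Fin 4 =>
                    L (ψ p.1) (φ (slots p.1 p.2)))).symm
              _ = ∏ q : Fin 10 × Fin 4, L (ψ (B q.1 q.2)) (φ q) := by
                  refine Fintype.prod_bijective (fun p : Fin 10 × Fin 4 => slots p.1 p.2) hbij _ _
                    fun p => ?_
                  rw [hBS p.1 p.2]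
              _ = ∏ b : Fin 10, ∏ k : Fin 4, L (ψ (B b k)) (φ (b, k)) :=
                  Fintype.prod_prod_type (f := fun q : Fin 10 × Fin 4 => L (ψ (B q.1 q.2)) (φ q))
    _ = 0 := by
          refine Finset.sum_eq_zero fun ψ _ => ?_
          obtain ⟨v, w, hvw, hψ⟩ := Fintype.exists_ne_map_eq_of_card_lt ψ (by norm_num)
          obtain ⟨b, k, k', hkk, hbkv, hbkw⟩ := hK v w hvw
          refine Finset.prod_eq_zero (Finset.mem_univ b) ?_
          rw [sum_eps_eq_det]
          refine Matrix.det_zero_of_column_eq hkk ?_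
          intro i
          simp only [Matrix.of_apply]
          rw [hbkv, hbkw, hψ]
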